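/- Let θ be a regular cardinal and λ = θ^{+η} for some successor ordinal η < θ. If D is a θ-covering matrix for λ such that CP(D) holds, then S^λ_{>θ} \ A_D is non-stationary in λ. -/

import Mathlib

noncomputable section

universe u

open Cardinal Set

/-- The order type of a set of ordinals: the unique ordinal `o` such that `s` is
order-isomorphic to `Set.Iio o` (and `0` if there is no such ordinal). -/
def otp (s : Set Ordinal) : Ordinal :=
  sInf {o : Ordinal | Nonempty (s ≃o Set.Iio o)}

/-- `A` is unbounded in `β`. -/
def IsUnboundedIn (A : Set Ordinal) (β : Ordinal) : Prop :=
  ∀ γ < β, ∃ δ ∈ A, γ ≤ δ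

/-- `γ` is a limit of elements of `C`. -/
def IsAccPt (C : Set Ordinal) (γ : Ordinal) : Prop :=
  ∀ δ < γ, ∃ ε ∈ C, δ < ε ∧ ε < γ

/-- `C` is club in `β`: a subset of `β`, unbounded in `β`, and closed under limits below `β`. -/
def IsClubIn (C : Set Ordinal) (β : Ordinal) : Prop :=
  C ⊆ Set.Iio β ∧ IsUnboundedIn C β ∧ ∀ γ < β, 0 < γ → IsAccPt C γ → γ ∈ C

/-- `S` is stationary in `β`: it meets every club in `β`. -/
def IsStationaryIn (S : Set Ordinal) (β : Ordinal) : Prop :=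
  ∀ C, IsClubIn C β → (S ∩ C).Nonempty

/-- `D` is a `θ`-covering matrix for `lam`. -/
def IsCoveringMatrix (θ lam : Cardinal) (D : Ordinal → Ordinal → Set Ordinal) : Prop :=
  (∀ β < lam.ord, (⋃ i ∈ Set.Iio θ.ord, D i β) = Set.Iio β) ∧
  (∀ β < lam.ord, ∀ i j, i < j → j < θ.ord → D i β ⊆ D j β) ∧
  (∀ β γ, β < γ → γ < lam.ord → ∀ i < θ.ord, ∃ j < θ.ord, D i β ⊆ D j γ)

/-- `D` is transitive. -/
def TransitiveMatrix (θ lam : Cardinal) (D : Ordinal → Ordinal → Set Ordinal) : Prop :=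
  ∀ α β, α < β → β < lam.ord → ∀ i < θ.ord, α ∈ D i β → D i α ⊆ D i β

/-- `D` is uniform: every limit `β < lam` has some `D i β` containing a club in `β`. -/
def UniformMatrix (θ lam : Cardinal) (D : Ordinal → Ordinal → Set Ordinal) : Prop :=
  ∀ β < lam.ord, Order.IsSuccLimit β → ∃ i < θ.ord, ∃ C ⊆ D i β, IsClubIn C β

/-- `D` is normal: the order types of its entries are bounded below `lam`. -/
def NormalMatrix (θ lam : Cardinal) (D : Ordinal → Ordinal → Set Ordinal) : Prop :=
  ∃ b < lam.ord, ∀ i < θ.ord, ∀ γ < lam.ord, otp (D i γ) < b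

/-- `β_D`: the least ordinal strictly above the order types of all entries of `D`. -/
def matrixBound (θ lam : Cardinal) (D : Ordinal → Ordinal → Set Ordinal) : Ordinal :=
  sInf {b | ∀ i < θ.ord, ∀ γ < lam.ord, otp (D i γ) < b}

/-- `D` is downward coherent. -/
def DownwardCoherent (θ lam : Cardinal) (D : Ordinal → Ordinal → Set Ordinal) : Prop :=
  ∀ α β, α < β → β < lam.ord → ∀ i < θ.ord, ∃ j < θ.ord, D i β ∩ Set.Iio α ⊆ D j α

/-- `D` is locally downward coherent. -/
def LocallyDownwardCoherent (θ lam : Cardinal.{u})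
    (D : Ordinal.{u} → Ordinal.{u} → Set Ordinal.{u}) : Prop :=
  ∀ X : Set Ordinal.{u}, X ⊆ Set.Iio lam.ord → #X ≤ Cardinal.lift.{u + 1} θ →
    ∃ γX < lam.ord, ∀ β < lam.ord, ∀ i < θ.ord, ∃ j < θ.ord,
      X ∩ D i β ⊆ X ∩ D j γX

/-- `D` is strongly locally downward coherent. -/
def StronglyLocallyDownwardCoherent (θ lam : Cardinal.{u})
    (D : Ordinal.{u} → Ordinal.{u} → Set Ordinal.{u}) : Prop :=
  ∀ X : Set Ordinal.{u}, X ⊆ Set.Iio lam.ord → #X ≤ Cardinal.lift.{u + 1} θ →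
    ∃ γX < lam.ord, ∀ β, γX ≤ β → β < lam.ord →
      ∃ i < θ.ord, ∀ j, i ≤ j → j < θ.ord → X ∩ D j β = X ∩ D j γX

/-- `D` covers `[T]^κ`. -/
def Covers (θ lam : Cardinal.{u}) (D : Ordinal.{u} → Ordinal.{u} → Set Ordinal.{u})
    (T : Set Ordinal.{u}) (κ : Cardinal.{u}) : Prop :=
  ∀ X ⊆ T, #X = Cardinal.lift.{u + 1} κ → ∃ i < θ.ord, ∃ β < lam.ord, X ⊆ D i β

/-- The covering property `CP(D)`. -/
def CP (θ lam : Cardinal) (D : Ordinal → Ordinal → Set Ordinal) : Prop :=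
  ∃ T ⊆ Set.Iio lam.ord, IsUnboundedIn T lam.ord ∧ Covers θ lam D T θ

/-- `CP(lam, θ)`: `CP(D)` holds for every locally downward coherent `θ`-covering matrix `D`. -/
def CPAll (θ lam : Cardinal) : Prop :=
  ∀ D, IsCoveringMatrix θ lam D → LocallyDownwardCoherent θ lam D → CP θ lam D

/-- `A_D`: the set of good points for `D`. -/
def goodPoints (θ lam : Cardinal) (D : Ordinal → Ordinal → Set Ordinal) : Set Ordinal :=
  {β | β < lam.ord ∧ θ < Ordinal.cof β ∧
    ∃ A ⊆ Set.Iio β, IsUnboundedIn A β ∧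
      ∀ γ < β, ∃ α < β, ∃ i < θ.ord, A ∩ Set.Iio γ ⊆ D i α}

/-- `θ^{+η}`: the `η`-th iterated cardinal successor of `θ`. -/
def iterSucc (θ : Cardinal) (η : Ordinal) : Cardinal :=
  Ordinal.limitRecOn η θ (fun _ ih => Order.succ ih)
    (fun o _ ih => ⨆ i : Set.Iio o, ih i.1 i.2)

/-- `f <* g` mod bounded subsets of `θ`. -/
def ltStar (θ : Cardinal) (f g : Ordinal → Ordinal) : Prop :=
  ∃ i < θ.ord, ∀ j, i ≤ j → j < θ.ord → f j < g j

/-- `⟨f β : β < δ⟩` is a club-increasing sequence of functions from `θ` to the ordinals. -/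
def ClubIncreasing (θ : Cardinal) (δ : Ordinal) (f : Ordinal → Ordinal → Ordinal) : Prop :=
  (∀ β < δ, ∀ i j, i ≤ j → j < θ.ord → f β i ≤ f β j) ∧
  (∀ α β, α < β → β < δ → ltStar θ (f α) (f β)) ∧
  (∀ β < δ, θ < Ordinal.cof β → ∃ C, IsClubIn C β ∧ ∃ i < θ.ord,
    ∀ α ∈ C, ∀ j, i ≤ j → j < θ.ord → f α j < f β j)

/-- `γ_f`: the least ordinal strictly above all values of the sequence. -/
def seqBound (θ : Cardinal) (δ : Ordinal) (f : Ordinal → Ordinal → Ordinal) : Ordinal :=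
  sInf {γ | ∀ β < δ, ∀ i < θ.ord, f β i < γ}

/-- `g` is an exact upper bound for `⟨f β : β < δ⟩` with respect to `<*` on `θ`. -/
def IsEub (θ : Cardinal) (δ : Ordinal) (f : Ordinal → Ordinal → Ordinal)
    (g : Ordinal → Ordinal) : Prop :=
  (∀ β < δ, ltStar θ (f β) g) ∧
  ∀ h : Ordinal → Ordinal, ltStar θ h g → ∃ β < δ, ltStar θ h (f β)

/-- The simultaneous stationary reflection principle `R(lam, θ)`. -/
def RPrinciple (lam θ : Cardinal) : Prop :=
  ∃ S ⊆ Set.Iio lam.ord, IsStationaryIn S lam.ord ∧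
    ∀ T : Ordinal → Set Ordinal,
      (∀ j < θ.ord, T j ⊆ S ∧ IsStationaryIn (T j) lam.ord) →
      ∃ α < lam.ord, ℵ₀ < Ordinal.cof α ∧
        ∀ j < θ.ord, IsStationaryIn (T j ∩ Set.Iio α) α

/-- A `□_κ`-sequence. -/
def IsSquareSeq (κ : Cardinal) (C : Ordinal → Set Ordinal) : Prop :=
  ∀ β < (Order.succ κ).ord, Order.IsSuccLimit β →
    IsClubIn (C β) β ∧ otp (C β) ≤ κ.ord ∧
    ∀ α ∈ C β, 0 < α → IsAccPt (C β) α → C β ∩ Set.Iio α = C α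

/-- The square principle `□_κ`. -/
def SquarePrinciple (κ : Cardinal) : Prop := ∃ C, IsSquareSeq κ C

/-- `f <* g` mod finite on `B ⊆ ω`. -/
def ltStarB (B : Set ℕ) (f g : ℕ → Ordinal) : Prop :=
  ∃ m, ∀ n ∈ B, m ≤ n → f n < g n

/-- `g` is an exact upper bound for `⟨f α : α < δ⟩` with respect to `<*` mod finite on `B`. -/
def IsEubB (B : Set ℕ) (δ : Ordinal) (f : Ordinal → ℕ → Ordinal) (g : ℕ → Ordinal) : Prop :=
  (∀ α < δ, ltStarB B (f α) g) ∧
  ∀ h : ℕ → Ordinal, ltStarB B h g → ∃ α < δ, ltStarB B h (f α)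

/-- A scale of length `ℵ_{ω+1}` in `∏_{n ∈ B} ℵ_n`. -/
def IsScale (B : Set ℕ) (f : Ordinal → ℕ → Ordinal) : Prop :=
  (∀ α < (Cardinal.aleph (Ordinal.omega0 + 1)).ord, ∀ n ∈ B, f α n < (Cardinal.aleph n).ord) ∧
  (∀ α β, α < β → β < (Cardinal.aleph (Ordinal.omega0 + 1)).ord → ltStarB B (f α) (f β)) ∧
  (∀ g : ℕ → Ordinal, (∀ n ∈ B, g n < (Cardinal.aleph n).ord) →
    ∃ α < (Cardinal.aleph (Ordinal.omega0 + 1)).ord, ltStarB B g (f α))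

/-!
Let `T` witness `CP(D)` and write `lam = θ^{+(ξ+1)}`. By induction on `ρ ≤ ξ`, every subset of
`T` of size at most `θ^{+ρ}` lies in a single entry `D(i, β)`: for `ρ = 0` pad it to size `θ`;
at a limit `ρ < θ` it is a union of fewer than `θ` covered pieces, whose columns are bounded
below the regular `lam` and whose rows are bounded below the regular `θ`; at a successor, enumerate
it in order type `μ = θ^{+ρ}`: the proper initial segments are covered, their columns can be moved
to a common one, and since `μ > θ` is regular one row occurs cofinally often.
Hence every `T ∩ γ`, `γ < lam`, is covered by some `D(i(γ), β(γ))`. At a closure point `δ` of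
`γ ↦ β(γ)` and of `γ ↦ (an element of T above γ)`, the set `T ∩ δ` is unbounded in `δ` and
witnesses that `δ` is good, and these closure points form a club.
-/

namespace Ordinal

theorem exists_lt_forall_le_of_card_lt_cof {S : Set Ordinal.{u}} {a : Ordinal.{u}}
    {f : Ordinal.{u} → Ordinal.{u}} (hS : #S < Cardinal.lift.{u + 1} a.cof)
    (hf : ∀ γ ∈ S, f γ < a) : ∃ b < a, ∀ γ ∈ S, f γ ≤ b := by
  have hbdd : BddAbove (f '' S) := ⟨a, by rintro _ ⟨γ, hγ, rfl⟩; exact (hf γ hγ).le⟩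
  refine ⟨sSup (f '' S), sSup_lt_of_lt_cof ?_ ?_,
    fun γ hγ => le_csSup hbdd (mem_image_of_mem f hγ)⟩
  · rw [← lift_cof]; exact mk_image_le.trans_lt hS
  · rintro _ ⟨γ, hγ, rfl⟩; exact hf γ hγ

theorem exists_lt_forall_le_of_lt_cof {o a : Ordinal.{u}} {f : Ordinal.{u} → Ordinal.{u}}
    (ho : o.card < a.cof) (hf : ∀ γ < o, f γ < a) : ∃ b < a, ∀ γ < o, f γ ≤ b :=
  exists_lt_forall_le_of_card_lt_cof (S := Iio o)
    (by rwa [Cardinal.mk_Iio_ordinal, Cardinal.lift_lt]) hf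

theorem exists_frequently_eq_of_card_lt_cof {o t : Ordinal.{u}}
    {f : Ordinal.{u} → Ordinal.{u}} (ht : t.card < o.cof) (hf : ∀ γ < o, f γ < t) :
    ∃ i < t, ∀ γ < o, ∃ δ, γ ≤ δ ∧ δ < o ∧ f δ = i := by
  by_contra! h
  choose! b hb hfb using h
  obtain ⟨s, hs, hbs⟩ := exists_lt_forall_le_of_lt_cof ht hb
  exact hfb (f s) (hf s hs) s (hbs _ (hf s hs)) hs rfl

end Ordinal

open Ordinal in
theorem exists_isClubIn_forall_lt {κ : Cardinal.{u}} (hκ : κ.IsRegular) (hκ₀ : ℵ₀ < κ)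
    {f : Ordinal.{u} → Ordinal.{u}} (hf : ∀ γ < κ.ord, f γ < κ.ord) :
    ∃ C, IsClubIn C κ.ord ∧ ∀ β ∈ C, ∀ γ < β, f γ < β := by
  have hlim : Order.IsSuccLimit κ.ord := isSuccLimit_ord hκ₀.le
  have hstep : ∀ β < κ.ord, ∃ b < κ.ord, β < b ∧ ∀ γ ≤ β, f γ < b := by
    intro β hβ
    obtain ⟨b, hb, hfb⟩ := exists_lt_forall_le_of_lt_cof (o := Order.succ β)
      (by rw [hκ.cof_ord]; exact Cardinal.lt_ord.mp (hlim.succ_lt hβ))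
      (fun γ hγ => hf γ (hγ.trans (hlim.succ_lt hβ)))
    refine ⟨Order.succ (max β b), hlim.succ_lt (max_lt hβ hb), ?_, fun γ hγ => ?_⟩
    · exact Order.lt_succ_of_le (le_max_left _ _)
    · exact Order.lt_succ_of_le ((hfb γ (Order.lt_succ_of_le hγ)).trans (le_max_right _ _))
  choose! g hg hβg hfg using hstep
  refine ⟨{β | 0 < β ∧ β < κ.ord ∧ ∀ γ < β, f γ < β}, ⟨fun β hβ => hβ.2.1, ?_, ?_⟩,
    fun β hβ => hβ.2.2⟩
  · intro γ₀ hγ₀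
    have hnfp : nfp g γ₀ < κ.ord := nfp_lt_ord (by rwa [hκ.cof_ord]) hg hγ₀
    have hiter : ∀ n, g^[n] γ₀ < κ.ord := fun n => (iterate_le_nfp g γ₀ n).trans_lt hnfp
    refine ⟨nfp g γ₀, ⟨?_, hnfp, fun γ hγ => ?_⟩, le_nfp g γ₀⟩
    · exact ((zero_le (a := γ₀)).trans_lt (hβg γ₀ hγ₀)).trans_le (iterate_le_nfp g γ₀ 1)
    · obtain ⟨n, hn⟩ := lt_nfp_iff.mp hγ
      calc f γ < g (g^[n] γ₀) := hfg _ (hiter n) γ hn.le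
        _ = g^[n + 1] γ₀ := (Function.iterate_succ_apply' g n γ₀).symm
        _ ≤ nfp g γ₀ := iterate_le_nfp g γ₀ (n + 1)
  · intro γ hγ hγ₀ hacc
    refine ⟨hγ₀, hγ, fun δ hδ => ?_⟩
    obtain ⟨ε, hε, hδε, hεγ⟩ := hacc δ hδ
    exact (hε.2.2 δ hδε).trans hεγ

section iterSucc

variable (θ : Cardinal.{u})

theorem iterSucc_zero : iterSucc θ (0 : Ordinal.{u}) = θ :=
  Ordinal.limitRecOn_zero _ _ _

theorem iterSucc_add_one (o : Ordinal.{u}) :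
    iterSucc θ (o + 1) = Order.succ (iterSucc θ o) :=
  Ordinal.limitRecOn_add_one _ _ _ _

theorem iterSucc_of_isSuccLimit {o : Ordinal.{u}} (ho : Order.IsSuccLimit o) :
    iterSucc θ o = ⨆ i : Iio o, iterSucc θ i :=
  Ordinal.limitRecOn_limit _ _ _ _ ho

theorem iterSucc_mono : Monotone (iterSucc θ : Ordinal.{u} → Cardinal.{u}) := by
  intro ρ' ρ hρ'
  induction ρ using WellFoundedLT.induction with
  | _ ρ IH =>
    rcases hρ'.eq_or_lt with rfl | hlt
    · rfl
    rcases Ordinal.zero_or_succ_or_isSuccLimit ρ with rfl | ⟨σ, rfl⟩ | hρ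
    · exact absurd hlt not_lt_zero
    · rw [Order.succ_eq_add_one, iterSucc_add_one]
      exact (IH σ (Order.lt_succ σ) (Order.lt_succ_iff.mp hlt)).trans (Order.le_succ _)
    · rw [iterSucc_of_isSuccLimit θ hρ]
      exact le_ciSup bddAbove_of_small (⟨ρ', hlt⟩ : Iio ρ)

theorem le_iterSucc (ρ : Ordinal.{u}) : θ ≤ iterSucc θ ρ := by
  simpa only [iterSucc_zero] using iterSucc_mono θ (zero_le (a := ρ))

variable {θ}

theorem exists_lt_iterSucc_of_isSuccLimit {ρ : Ordinal.{u}} (hρ : Order.IsSuccLimit ρ)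
    {c : Cardinal.{u}} (hc : c < iterSucc θ ρ) : ∃ i < ρ, c < iterSucc θ i := by
  rw [iterSucc_of_isSuccLimit θ hρ] at hc
  have : Nonempty (Iio ρ) := ⟨⟨0, hρ.bot_lt⟩⟩
  obtain ⟨⟨i, hi⟩, hci⟩ := exists_lt_of_lt_ciSup hc
  exact ⟨i, hi, hci⟩

theorem isRegular_iterSucc_succ (hθ : ℵ₀ ≤ θ) (σ : Ordinal.{u}) :
    (iterSucc θ (σ + 1)).IsRegular := by
  rw [iterSucc_add_one]
  exact isRegular_succ (hθ.trans (le_iterSucc θ σ))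

end iterSucc

theorem exists_injOn_lt_ord {X : Set Ordinal.{u}} {c : Cardinal.{u}}
    (hX : #X ≤ lift.{u + 1} c) :
    ∃ e : Ordinal.{u} → Ordinal.{u}, InjOn e X ∧ ∀ x ∈ X, e x < c.ord := by
  classical
  rw [← card_ord c, ← mk_Iio_ordinal] at hX
  obtain ⟨emb⟩ := hX
  refine ⟨fun x => if hx : x ∈ X then emb ⟨x, hx⟩ else 0, fun x hx y hy hxy => ?_,
    fun x hx => by simp only [dif_pos hx]; exact (emb ⟨x, hx⟩).2⟩
  simp only [dif_pos hx, dif_pos hy] at hxy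
  exact congrArg Subtype.val (emb.injective (Subtype.ext hxy))

theorem mk_inter_preimage_Iio_le {X : Set Ordinal.{u}} {e : Ordinal.{u} → Ordinal.{u}}
    (he : InjOn e X) (γ : Ordinal.{u}) :
    #(X ∩ e ⁻¹' Iio γ : Set Ordinal.{u}) ≤ lift.{u + 1} γ.card := by
  rw [← mk_image_eq_of_injOn e _ (he.mono inter_subset_left), ← mk_Iio_ordinal]
  exact mk_le_mk_of_subset (image_subset_iff.mpr inter_subset_right)

theorem lift_le_mk_of_isUnboundedIn {κ : Cardinal.{u}} (hκ : κ.IsRegular) {T : Set Ordinal.{u}}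
    (hT : T ⊆ Iio κ.ord) (hTu : IsUnboundedIn T κ.ord) : lift.{u + 1} κ ≤ #T := by
  by_contra! hsmall
  obtain ⟨b, hb, hTb⟩ := Ordinal.exists_lt_forall_le_of_card_lt_cof (f := id)
    (by rwa [hκ.cof_ord]) fun γ hγ => hT hγ
  obtain ⟨δ, hδ, hbδ⟩ := hTu _ ((isSuccLimit_ord hκ.aleph0_le).succ_lt hb)
  exact (Order.lt_succ b).not_ge (hbδ.trans (hTb δ hδ))

theorem biUnion_inter_preimage_Iio_eq {α : Type*} {X : Set α} {e : α → Ordinal.{u}}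
    {ρ : Ordinal.{u}} {g : Ordinal.{u} → Ordinal.{u}} (h : ∀ x ∈ X, ∃ i < ρ, e x < g i) :
    ⋃ i < ρ, X ∩ e ⁻¹' Iio (g i) = X := by
  refine subset_antisymm (iUnion₂_subset fun _ _ => inter_subset_left) fun x hx => ?_
  obtain ⟨i, hi, hxi⟩ := h x hx
  exact mem_biUnion hi ⟨hx, hxi⟩

def IsCovered (θ lam : Cardinal.{u}) (D : Ordinal.{u} → Ordinal.{u} → Set Ordinal.{u})
    (X : Set Ordinal.{u}) : Prop :=
  ∃ i < θ.ord, ∃ β < lam.ord, X ⊆ D i β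

section IsCovered

variable {θ lam : Cardinal.{u}} {D : Ordinal.{u} → Ordinal.{u} → Set Ordinal.{u}}

theorem Covers.isCovered_of_mk_le (hθ : ℵ₀ ≤ θ) {T : Set Ordinal.{u}}
    (hcov : Covers θ lam D T θ) (hT : lift.{u + 1} θ ≤ #T) {X : Set Ordinal.{u}} (hXT : X ⊆ T)
    (hX : #X ≤ lift.{u + 1} θ) : IsCovered θ lam D X := by
  obtain ⟨Y, hYT, hY⟩ := le_mk_iff_exists_subset.mp hT
  have hXY : #(X ∪ Y : Set Ordinal.{u}) = lift.{u + 1} θ := by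
    refine le_antisymm ((mk_union_le X Y).trans ?_) (hY ▸ mk_le_mk_of_subset subset_union_right)
    rw [hY]
    exact (add_le_add_left hX _).trans (add_eq_self (aleph0_le_lift.mpr hθ)).le
  obtain ⟨i, hi, β, hβ, hXYD⟩ := hcov _ (union_subset hXT hYT) hXY
  exact ⟨i, hi, β, hβ, subset_union_left.trans hXYD⟩

namespace IsCoveringMatrix

theorem mono (hD : IsCoveringMatrix θ lam D) {β : Ordinal.{u}} (hβ : β < lam.ord)
    {i j : Ordinal.{u}} (hij : i ≤ j) (hj : j < θ.ord) : D i β ⊆ D j β := by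
  rcases hij.eq_or_lt with rfl | hlt
  exacts [subset_rfl, hD.2.1 β hβ i j hlt hj]

theorem exists_common_column (hD : IsCoveringMatrix θ lam D) (hlam : lam.IsRegular)
    {o : Ordinal.{u}} (ho : o.card < lam) {X : Ordinal.{u} → Set Ordinal.{u}}
    (hX : ∀ γ < o, IsCovered θ lam D (X γ)) :
    ∃ β < lam.ord, ∀ γ < o, ∃ j < θ.ord, X γ ⊆ D j β := by
  choose! i hi β hβ hXβ using hX
  obtain ⟨b, hb, hβb⟩ := Ordinal.exists_lt_forall_le_of_lt_cof (by rwa [hlam.cof_ord]) hβ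
  have hb' : Order.succ b < lam.ord := (isSuccLimit_ord hlam.aleph0_le).succ_lt hb
  refine ⟨Order.succ b, hb', fun γ hγ => ?_⟩
  obtain ⟨j, hj, hij⟩ := hD.2.2 (β γ) _ (Order.lt_succ_of_le (hβb γ hγ)) hb' (i γ) (hi γ hγ)
  exact ⟨j, hj, (hXβ γ hγ).trans hij⟩

theorem isCovered_biUnion (hD : IsCoveringMatrix θ lam D) (hθ : θ.IsRegular)
    (hlam : lam.IsRegular) (hθlam : θ ≤ lam) {ρ : Ordinal.{u}} (hρ : ρ < θ.ord)
    {X : Ordinal.{u} → Set Ordinal.{u}}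
    (hX : ∀ γ < ρ, IsCovered θ lam D (X γ)) : IsCovered θ lam D (⋃ γ < ρ, X γ) := by
  have hρθ : ρ.card < θ := lt_ord.mp hρ
  obtain ⟨β, hβ, hXβ⟩ := hD.exists_common_column hlam (hρθ.trans_le hθlam) hX
  choose! j hj hXj using hXβ
  obtain ⟨J, hJ, hjJ⟩ := Ordinal.exists_lt_forall_le_of_lt_cof (by rwa [hθ.cof_ord]) hj
  exact ⟨J, hJ, β, hβ,
    iUnion₂_subset fun γ hγ => (hXj γ hγ).trans (hD.mono hβ (hjJ γ hγ) hJ)⟩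

theorem isCovered_biUnion_of_monotone (hD : IsCoveringMatrix θ lam D) (hlam : lam.IsRegular)
    {μ : Cardinal.{u}} (hμ : μ.IsRegular) (hθμ : θ < μ) (hμlam : μ < lam)
    {X : Ordinal.{u} → Set Ordinal.{u}}
    (hXmono : Monotone X) (hX : ∀ γ < μ.ord, IsCovered θ lam D (X γ)) :
    IsCovered θ lam D (⋃ γ < μ.ord, X γ) := by
  obtain ⟨β, hβ, hXβ⟩ := hD.exists_common_column hlam (by rwa [card_ord]) hX
  choose! j hj hXj using hXβ
  obtain ⟨J, hJ, hjJ⟩ := Ordinal.exists_frequently_eq_of_card_lt_cof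
    (by rwa [card_ord, hμ.cof_ord]) hj
  refine ⟨J, hJ, β, hβ, iUnion₂_subset fun γ hγ => ?_⟩
  obtain ⟨δ, hγδ, hδ, rfl⟩ := hjJ γ hγ
  exact (hXmono hγδ).trans (hXj δ hδ)

theorem isCovered_of_mk_le_iterSucc (hD : IsCoveringMatrix θ lam D) (hθ : θ.IsRegular)
    (hlam : lam.IsRegular) {T : Set Ordinal.{u}} (hT : T ⊆ Iio lam.ord)
    (hTu : IsUnboundedIn T lam.ord) (hcov : Covers θ lam D T θ) {ρ : Ordinal.{u}}
    (hρ : ρ < θ.ord) (hρlam : iterSucc θ ρ < lam) {X : Set Ordinal.{u}} (hXT : X ⊆ T)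
    (hX : #X ≤ lift.{u + 1} (iterSucc θ ρ)) : IsCovered θ lam D X := by
  induction ρ using WellFoundedLT.induction generalizing X with
  | _ ρ IH =>
  have hθlam : θ ≤ lam := (le_iterSucc θ ρ).trans hρlam.le
  -- The pieces of `X` fed to the induction are the initial segments `X ∩ e ⁻¹' Iio γ`.
  obtain ⟨e, he, heX⟩ := exists_injOn_lt_ord hX
  rcases Ordinal.zero_or_succ_or_isSuccLimit ρ with rfl | ⟨σ, rfl⟩ | hρlim
  · rw [iterSucc_zero] at hX
    exact hcov.isCovered_of_mk_le hθ.aleph0_le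
      ((lift_le.mpr hθlam).trans (lift_le_mk_of_isUnboundedIn hlam hT hTu)) hXT hX
  · rw [Order.succ_eq_add_one] at *
    have hσ : σ < σ + 1 := lt_add_one σ
    have hμlim := isSuccLimit_ord (isRegular_iterSucc_succ hθ.aleph0_le σ).aleph0_le
    rw [← biUnion_inter_preimage_Iio_eq (g := id)
      fun x hx => ⟨_, hμlim.succ_lt (heX x hx), Order.lt_succ (e x)⟩]
    refine hD.isCovered_biUnion_of_monotone hlam (isRegular_iterSucc_succ hθ.aleph0_le σ) ?_
      hρlam (fun γ δ hγδ => inter_subset_inter_right _ (preimage_mono (Iio_subset_Iio hγδ)))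
      fun γ hγ => IH σ hσ (hσ.trans hρ)
        ((iterSucc_mono θ hσ.le).trans_lt hρlam) (inter_subset_left.trans hXT)
        ((mk_inter_preimage_Iio_le he γ).trans (lift_le.mpr ?_))
    · rw [iterSucc_add_one]
      exact (le_iterSucc θ σ).trans_lt (Order.lt_succ _)
    · rw [← Order.lt_succ_iff, ← iterSucc_add_one]
      exact lt_ord.mp hγ
  · rw [← biUnion_inter_preimage_Iio_eq (X := X) (e := e) (g := fun i => (iterSucc θ i).ord)
      fun x hx => ?_]
    · exact hD.isCovered_biUnion hθ hlam hθlam hρ fun i hi => IH i hi (hi.trans hρ)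
        ((iterSucc_mono θ hi.le).trans_lt hρlam) (inter_subset_left.trans hXT)
        ((mk_inter_preimage_Iio_le he _).trans (by rw [card_ord]))
    obtain ⟨i, hi, hxi⟩ := exists_lt_iterSucc_of_isSuccLimit hρlim (lt_ord.mp (heX x hx))
    exact ⟨i, hi, lt_ord.mpr hxi⟩

end IsCoveringMatrix

end IsCovered

theorem exists_isClubIn_subset_goodPoints {θ lam : Cardinal.{u}}
    {D : Ordinal.{u} → Ordinal.{u} → Set Ordinal.{u}} (hlam : lam.IsRegular)
    (hlam₀ : ℵ₀ < lam) {T : Set Ordinal.{u}} (hT : T ⊆ Iio lam.ord) (hTu : IsUnboundedIn T lam.ord)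
    (hinit : ∀ γ < lam.ord, IsCovered θ lam D (T ∩ Iio γ)) :
    ∃ C, IsClubIn C lam.ord ∧ ∀ β ∈ C, θ < β.cof → β ∈ goodPoints θ lam D := by
  choose! i hi α hα hTα using hinit
  choose! t ht hγt using hTu
  obtain ⟨C, hC, hCf⟩ :=
    exists_isClubIn_forall_lt hlam hlam₀ (f := fun γ => max (α γ) (t γ))
      fun γ hγ => max_lt (hα γ hγ) (hT (ht γ hγ))
  refine ⟨C, hC, fun β hβ hcof => ⟨hC.1 hβ, hcof, T ∩ Iio β, inter_subset_right,
    fun γ hγ => ?_, fun γ hγ => ?_⟩⟩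
  all_goals
    have hγlam : γ < lam.ord := hγ.trans (hC.1 hβ)
    have hγβ : max (α γ) (t γ) < β := hCf β hβ γ hγ
  · exact ⟨t γ, ⟨ht γ hγlam, (le_max_right _ _).trans_lt hγβ⟩, hγt γ hγlam⟩
  · exact ⟨α γ, (le_max_left _ _).trans_lt hγβ, i γ, hi γ hγlam,
      fun x hx => hTα γ hγlam ⟨hx.1.1, hx.2⟩⟩

/-- If `lam = θ^{+η}` for a successor ordinal `η < θ` and `CP(D)` holds for a
`θ`-covering matrix `D` for `lam`, then `S^lam_{>θ} \\ A_D` is non-stationary in `lam`. -/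
theorem stmt15 (θ : Cardinal) (hθ : θ.IsRegular) (η : Ordinal) (hη : η < θ.ord)
    (hsuccη : ∃ ξ, η = ξ + 1) (lam : Cardinal) (hlam : lam = iterSucc θ η)
    (D : Ordinal → Ordinal → Set Ordinal) (hD : IsCoveringMatrix θ lam D)
    (hcp : CP θ lam D) :
    ¬ IsStationaryIn ({β | β < lam.ord ∧ θ < Ordinal.cof β} \ goodPoints θ lam D)
      lam.ord := by
  obtain ⟨ξ, rfl⟩ := hsuccη
  obtain ⟨T, hT, hTu, hcov⟩ := hcp
  have hlam_succ : lam = Order.succ (iterSucc θ ξ) := hlam.trans (iterSucc_add_one θ ξ)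
  have hlam_reg : lam.IsRegular := hlam ▸ isRegular_iterSucc_succ hθ.aleph0_le ξ
  have hθlam : θ < lam := hlam_succ ▸ (le_iterSucc θ ξ).trans_lt (Order.lt_succ _)
  have hinit : ∀ γ < lam.ord, IsCovered θ lam D (T ∩ Iio γ) := fun γ hγ =>
    hD.isCovered_of_mk_le_iterSucc hθ hlam_reg hT hTu hcov ((lt_add_one ξ).trans hη)
      (hlam_succ ▸ Order.lt_succ _) inter_subset_left
      ((mk_inter_preimage_Iio_le (injOn_id T) γ).trans (lift_le.mpr
        (Order.lt_succ_iff.mp (hlam_succ ▸ lt_ord.mp hγ))))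
  obtain ⟨C, hC, hgood⟩ :=
    exists_isClubIn_subset_goodPoints hlam_reg (hθ.aleph0_le.trans_lt hθlam) hT hTu hinit
  rintro hstat
  obtain ⟨β, ⟨⟨-, hβcof⟩, hβbad⟩, hβC⟩ := hstat C hC
  exact hβbad (hgood β hβC hβcof)

end
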